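/- arXiv:1308.4192 — 3 statements merged into one kernel-verified Lean document; each statement's English description precedes it below -/
import Mathlib

section
/- For n ≥ 2l+2 and all s ≥ 1, ∑_{i=0}^{s-1} F_{h,n+i}^{l}(x) · h(x)^{s-1-i} = F_{h,n+s+1}^{l+1}(x) − h(x)^s · F_{h,n+1}^{l+1}(x). -/
open Finset

/-- Incomplete h-Fibonacci polynomials: F_{h,n}^l = ∑_{i=0}^l C(n-1-i,i) h^(n-1-2i). -/
noncomputable def incF (h : ℝ) (n l : ℕ) : ℝ :=
  ∑ i ∈ Finset.range (l + 1), (Nat.choose (n - 1 - i) i : ℝ) * h ^ (n - 1 - 2 * i)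

/-- Incomplete h-Lucas polynomials: L_{h,n}^l = ∑_{i=0}^l (n/(n-i)) C(n-i,i) h^(n-2i). -/
noncomputable def incL (h : ℝ) (n l : ℕ) : ℝ :=
  ∑ i ∈ Finset.range (l + 1), ((n : ℝ) / ((n - i : ℕ) : ℝ)) * (Nat.choose (n - i) i : ℝ) * h ^ (n - 2 * i)

/-- h-Fibonacci sequence. -/
noncomputable def Fh (h : ℝ) : ℕ → ℝ
  | 0 => 0
  | 1 => 1
  | n + 2 => h * Fh h (n + 1) + Fh h n

/-- h-Lucas sequence. -/
noncomputable def Lh (h : ℝ) : ℕ → ℝ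
  | 0 => 2
  | 1 => h
  | n + 2 => h * Lh h (n + 1) + Lh h n

lemma incF_rec (h : ℝ) (n l : ℕ) (hn : 2 * l + 2 ≤ n) :
    incF h (n + 2) (l + 1) = h * incF h (n + 1) (l + 1) + incF h n l := by
  unfold incF
  rw [Finset.mul_sum]
  rw [Finset.sum_range_succ' (fun i => ((n + 2 - 1 - i).choose i : ℝ) * h ^ (n + 2 - 1 - 2 * i)) (l + 1)]
  rw [Finset.sum_range_succ' (fun i => h * (((n + 1 - 1 - i).choose i : ℝ) * h ^ (n + 1 - 1 - 2 * i))) (l + 1)]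
  have e1 : ∀ j ∈ Finset.range (l + 1),
      ((n + 2 - 1 - (j + 1)).choose (j + 1) : ℝ) * h ^ (n + 2 - 1 - 2 * (j + 1)) =
      h * (((n + 1 - 1 - (j + 1)).choose (j + 1) : ℝ) * h ^ (n + 1 - 1 - 2 * (j + 1))) +
      ((n - 1 - j).choose j : ℝ) * h ^ (n - 1 - 2 * j) := by
    intro j hj
    have hjl : j < l + 1 := Finset.mem_range.mp hj
    have a1 : n + 2 - 1 - (j + 1) = (n - j - 1) + 1 := by omega
    have a2 : n + 1 - 1 - (j + 1) = n - j - 1 := by omega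
    have a3 : n - 1 - j = n - j - 1 := by omega
    have a4 : n + 2 - 1 - 2 * (j + 1) = n - 1 - 2 * j := by omega
    have a5 : (n + 1 - 1 - 2 * (j + 1)) + 1 = n - 1 - 2 * j := by omega
    rw [a1, a2, a3, a4, Nat.choose_succ_succ', ← a5, pow_succ]
    push_cast
    ring
  rw [Finset.sum_congr rfl e1, Finset.sum_add_distrib]
  have h5 : n + 2 - 1 - 2 * 0 = n + 1 := by omega
  have h6 : n + 1 - 1 - 2 * 0 = n := by omega
  simp only [h5, h6, Nat.choose_zero_right, Nat.cast_one, one_mul, Nat.sub_zero]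
  rw [pow_succ]
  ring

theorem incF_telescoping_sum (h : ℝ) (n l s : ℕ) (hn : 2 * l + 2 ≤ n) (hs : 1 ≤ s) :
    ∑ i ∈ Finset.range s, incF h (n + i) l * h ^ (s - 1 - i) =
      incF h (n + s + 1) (l + 1) - h ^ s * incF h (n + 1) (l + 1) := by
  induction s with
  | zero => omega
  | succ s ih =>
    rcases Nat.eq_zero_or_pos s with h0 | hpos
    · subst h0
      simp only [Finset.sum_range_one, Nat.sub_self, pow_zero, mul_one, pow_one, add_zero]
      have k := incF_rec h n l hn
      have e : n + 1 + 1 = n + 2 := rfl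
      rw [e, k, Finset.sum_range_one]
      simp
    · have IH := ih hpos
      rw [Finset.sum_range_succ]
      have step : ∀ i ∈ Finset.range s,
          incF h (n + i) l * h ^ (s + 1 - 1 - i) = h * (incF h (n + i) l * h ^ (s - 1 - i)) := by
        intro i hi
        have his : i < s := Finset.mem_range.mp hi
        have : s + 1 - 1 - i = (s - 1 - i) + 1 := by omega
        rw [this, pow_succ]
        ring
      rw [Finset.sum_congr rfl step, ← Finset.mul_sum, IH]
      have k := incF_rec h (n + s) l (by omega)
      have e : n + (s + 1) + 1 = n + s + 2 := rfl
      rw [e, k]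
      have e2 : n + s + 1 = n + s + 1 := rfl
      have e3 : s + 1 - 1 - s = 0 := by omega
      simp only [e3, pow_zero, mul_one, pow_succ]
      ring
end

section
/- For n ≥ 1 and 0 ≤ l ≤ ⌊n/2⌋, L_{h,n}^{l}(x) = F_{h,n-1}^{l-1}(x) + F_{h,n+1}^{l}(x), where F_{h,n-1}^{-1} is interpreted as the empty sum 0 when l = 0. -/
open Finset

/-! Term by term, the Lucas coefficient `n/(n-i) C(n-i,i)` splits as `C(n-i-1,i-1) + C(n-i,i)`
(because `i C(m,i) = m C(m-1,i-1)`), and these are exactly the `(i-1)`-st term of `F_{h,n-1}` and the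
`i`-th term of `F_{h,n+1}`, with the same power `h^(n-2i)`. The `i = 0` term is `h^n` on both sides. -/

theorem div_sub_mul_choose_eq_choose_add_choose {n i : ℕ} (hi : i + 1 < n) :
    (n : ℝ) / ((n - (i + 1) : ℕ) : ℝ) * ((n - (i + 1)).choose (i + 1) : ℝ)
      = ((n - (i + 1) - 1).choose i : ℝ) + ((n - (i + 1)).choose (i + 1) : ℝ) := by
  obtain ⟨m, rfl⟩ := Nat.exists_eq_add_of_lt hi
  have hsub : i + 1 + m + 1 - (i + 1) = m + 1 := by omega
  have hm : ((m + 1 : ℕ) : ℝ) ≠ 0 := by positivity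
  have hpascal : ((m + 1 : ℕ) : ℝ) * (m.choose i : ℝ) = ((m + 1).choose (i + 1) : ℝ) * (i + 1) := by
    exact_mod_cast Nat.add_one_mul_choose_eq m i
  rw [hsub, Nat.add_sub_cancel]
  field_simp
  push_cast at hpascal ⊢
  linear_combination -hpascal

theorem incF_succ (h : ℝ) (n l : ℕ) :
    incF h (n + 1) l = ∑ i ∈ range (l + 1), (Nat.choose (n - i) i : ℝ) * h ^ (n - 2 * i) := by
  simp only [incF, Nat.add_sub_cancel]

theorem incL_eq_incF_add (h : ℝ) (n l : ℕ) (hn : 1 ≤ n) (hl : l ≤ n / 2) :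
    incL h n l = (if l = 0 then 0 else incF h (n - 1) (l - 1)) + incF h (n + 1) l := by
  have hn0 : (n : ℝ) ≠ 0 := by positivity
  cases l with
  | zero => simp [incL, incF_succ, hn0]
  | succ k =>
    have hterm : ∀ i ∈ range (k + 1),
        (n : ℝ) / ((n - (i + 1) : ℕ) : ℝ) * ((n - (i + 1)).choose (i + 1) : ℝ) * h ^ (n - 2 * (i + 1))
          = ((n - 1 - 1 - i).choose i : ℝ) * h ^ (n - 1 - 1 - 2 * i)
            + ((n - (i + 1)).choose (i + 1) : ℝ) * h ^ (n - 2 * (i + 1)) := by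
      intro i hi
      have hi' : i + 1 < n := by simp only [mem_range] at hi; omega
      rw [div_sub_mul_choose_eq_choose_add_choose hi',
        show n - 1 - 1 - i = n - (i + 1) - 1 by omega, show n - 1 - 1 - 2 * i = n - 2 * (i + 1) by omega]
      ring
    rw [if_neg k.succ_ne_zero, Nat.add_sub_cancel, incL, incF_succ, incF, sum_range_succ',
      sum_range_succ' _ (k + 1), sum_congr rfl hterm, sum_add_distrib]
    simp only [tsub_zero, mul_zero, Nat.choose_zero_right, Nat.cast_one, mul_one, div_self hn0, one_mul]
    ring
end

section
/- For n ≥ 1, the h-Lucas numbers satisfy the explicit formula L_{h,n} = ∑_{i=0}^{⌊n/2⌋} (n/(n-i))·C(n-i, i)·h^{n-2i}. -/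
open Finset

noncomputable def G (h : ℝ) (n i : ℕ) : ℝ := (Nat.choose (n - i) i : ℝ) * h ^ (n - 2 * i)

lemma G_zero (h : ℝ) {n i : ℕ} (hi : n < 2 * i) : G h n i = 0 := by
  have : Nat.choose (n - i) i = 0 := Nat.choose_eq_zero_of_lt (by omega)
  simp [G, this]

lemma sum_G_extend (h : ℝ) (n M : ℕ) (hM : n / 2 + 1 ≤ M) :
    ∑ i ∈ range (n / 2 + 1), G h n i = ∑ i ∈ range M, G h n i := by
  apply Finset.sum_subset (Finset.range_subset_range.2 hM)
  intro i _ hi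
  simp only [Finset.mem_range] at hi
  exact G_zero h (by omega)

lemma G_rec (h : ℝ) (n i : ℕ) :
    G h (n+2) i = h * G h (n+1) i + (if i = 0 then 0 else G h n (i-1)) := by
  rcases i with _ | k
  · simp [G, pow_succ]; ring
  · simp only [Nat.succ_ne_zero, if_neg, Nat.add_sub_cancel]
    rcases lt_or_ge n (2*k) with hk | hk
    · rw [G_zero h (by omega), G_zero h (by omega), G_zero h (by omega)]; simp
    rcases eq_or_lt_of_le hk with hk2 | hk2
    · have h1 : n + 2 - (k+1) = k+1 := by omega
      have h2 : n + 1 - (k+1) = k := by omega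
      have h3 : n - k = k := by omega
      have e1 : n + 2 - 2*(k+1) = 0 := by omega
      have e2 : n - 2*k = 0 := by omega
      rw [G, G, G, h1, h2, h3, e1, e2]
      have hz : Nat.choose k (k+1) = 0 := Nat.choose_eq_zero_of_lt (by omega)
      simp [hz]
    · have h1 : n + 2 - (k+1) = (n - k) + 1 := by omega
      have h2 : n + 1 - (k+1) = n - k := by omega
      have e1 : n + 2 - 2*(k+1) = (n - 2*k - 1) + 1 := by omega
      have e2 : n + 1 - 2*(k+1) = n - 2*k - 1 := by omega
      have e3 : n - 2*k = (n - 2*k - 1) + 1 := by omega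
      rw [G, G, G, h1, h2, e1, e2, e3, Nat.choose_succ_succ]
      push_cast
      ring

lemma sum_G_rec (h : ℝ) (n : ℕ) :
    ∑ i ∈ range (n+3), G h (n+2) i
      = h * ∑ i ∈ range (n+3), G h (n+1) i + ∑ i ∈ range (n+3), G h n i := by
  have h1 : ∑ i ∈ range (n+3), G h (n+2) i
      = ∑ i ∈ range (n+3), (h * G h (n+1) i + (if i = 0 then 0 else G h n (i-1))) :=
    Finset.sum_congr rfl (fun i _ => G_rec h n i)
  rw [h1, Finset.sum_add_distrib, ← Finset.mul_sum]
  congr 1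
  rw [Finset.sum_range_succ' (fun i => if i = 0 then 0 else G h n (i-1)) (n+2)]
  simp only [Nat.succ_ne_zero, if_neg, Nat.add_sub_cancel, add_zero, if_pos]
  apply Finset.sum_subset
  · intro x hx; simp only [Finset.mem_range] at hx ⊢; omega
  · intro i _ hi
    simp only [Finset.mem_range] at hi
    exact G_zero h (by omega)

lemma fib_explicit (h : ℝ) : ∀ n : ℕ, Fh h (n+1) = ∑ i ∈ range (n/2 + 1), G h n i := by
  intro n
  induction n using Nat.twoStepInduction with
  | zero => simp [Fh, G]
  | one => simp [Fh, G]
  | more n ih1 ih2 =>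
      have hr : Fh h (n+3) = h * Fh h (n+2) + Fh h (n+1) := rfl
      rw [hr, ih2, ih1, sum_G_extend h (n+1) (n+3) (by omega),
          sum_G_extend h n (n+3) (by omega),
          sum_G_extend h (n+2) (n+3) (by omega), sum_G_rec]

lemma lucas_fib (h : ℝ) : ∀ n : ℕ, Lh h (n+1) = Fh h n + Fh h (n+2) := by
  intro n
  induction n using Nat.twoStepInduction with
  | zero => show (h : ℝ) = 0 + (h * 1 + 0); ring
  | one => show h * h + 2 = 1 + (h * (h * 1 + 0) + 1); ring
  | more n ih1 ih2 =>
      have hr : Lh h (n+3) = h * Lh h (n+2) + Lh h (n+1) := rfl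
      have f4 : Fh h (n+4) = h * Fh h (n+3) + Fh h (n+2) := rfl
      have f2 : Fh h (n+2) = h * Fh h (n+1) + Fh h n := rfl
      rw [hr, ih2, ih1, f4, f2]
      ring

lemma coef_id (n i : ℕ) (hi : 1 ≤ i) (h2 : 2 * i ≤ n) :
    (n : ℝ) / ((n - i : ℕ) : ℝ) * (Nat.choose (n - i) i : ℝ)
      = (Nat.choose (n - i) i : ℝ) + (Nat.choose (n - i - 1) (i - 1) : ℝ) := by
  have key : (n - i) * Nat.choose (n - i - 1) (i - 1) = Nat.choose (n - i) i * i := by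
    have h0 := Nat.add_one_mul_choose_eq (n - i - 1) (i - 1)
    rwa [show n - i - 1 + 1 = n - i by omega, show i - 1 + 1 = i by omega] at h0
  have hne : ((n - i : ℕ) : ℝ) ≠ 0 := Nat.cast_ne_zero.2 (by omega)
  have hcast : ((n - i : ℕ) : ℝ) * (Nat.choose (n-i-1) (i-1) : ℝ)
      = (Nat.choose (n - i) i : ℝ) * i := by exact_mod_cast key
  have hn : (n : ℝ) = ((n - i : ℕ) : ℝ) + i := by
    rw [Nat.cast_sub (by omega : i ≤ n)]; ring
  field_simp
  rw [hn]
  nlinarith [hcast]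

theorem Lh_explicit (h : ℝ) (n : ℕ) (hn : 1 ≤ n) :
    Lh h n = ∑ i ∈ Finset.range (n / 2 + 1),
      ((n : ℝ) / ((n - i : ℕ) : ℝ)) * (Nat.choose (n - i) i : ℝ) * h ^ (n - 2 * i) := by
  obtain ⟨m, rfl⟩ : ∃ m, n = m + 1 := ⟨n - 1, by omega⟩
  rcases m with _ | k
  · show Lh h 1 = _
    norm_num [Lh]
  · simp only [show k + 1 + 1 = k + 2 from rfl]
    have l : Lh h (k+2) = Fh h (k+1) + Fh h (k+3) := lucas_fib h (k+1)
    have f1 : Fh h (k+1) = ∑ i ∈ range (k/2+1), G h k i := fib_explicit h k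
    have f3 : Fh h (k+3) = ∑ i ∈ range ((k+2)/2+1), G h (k+2) i := fib_explicit h (k+2)
    rw [l, f1, f3]
    have key : ∑ i ∈ range ((k+2)/2 + 1),
        ((k+2 : ℕ) : ℝ) / (((k+2) - i : ℕ) : ℝ) * (Nat.choose ((k+2) - i) i : ℝ) * h ^ ((k+2) - 2 * i)
        = ∑ i ∈ range ((k+2)/2 + 1),
            (G h (k+2) i + (if i = 0 then 0 else G h k (i-1))) := by
      apply Finset.sum_congr rfl
      intro i hi
      simp only [Finset.mem_range] at hi
      have h2i : 2 * i ≤ k + 2 := by omega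
      rcases Nat.eq_zero_or_pos i with rfl | hip
      · rw [if_pos rfl, add_zero]
        show ((k+2 : ℕ) : ℝ) / (((k+2) - 0 : ℕ) : ℝ) * (Nat.choose ((k+2) - 0) 0 : ℝ) * h ^ ((k+2) - 2 * 0) = _
        rw [Nat.sub_zero, Nat.choose_zero_right]
        have : ((k+2 : ℕ) : ℝ) ≠ 0 := by positivity
        rw [div_self this]
        show _ = (Nat.choose (k+2-0) 0 : ℝ) * h ^ (k+2-2*0)
        rw [Nat.sub_zero, Nat.choose_zero_right]
        ring
      · rw [if_neg (by omega), coef_id (k+2) i (by omega) h2i]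
        have g1 : G h (k+2) i = (Nat.choose (k+2-i) i : ℝ) * h ^ (k+2-2*i) := rfl
        have g2 : G h k (i-1) = (Nat.choose (k-(i-1)) (i-1) : ℝ) * h ^ (k-2*(i-1)) := rfl
        rw [g1, g2, show k - (i-1) = k+2-i-1 by omega, show k - 2*(i-1) = k+2-2*i by omega]
        ring
    rw [key, Finset.sum_add_distrib]
    have hB : ∑ i ∈ range ((k+2)/2+1), (if i = 0 then 0 else G h k (i-1))
        = ∑ i ∈ range (k/2+1), G h k i := by
      rw [show (k+2)/2 + 1 = (k/2+1) + 1 by omega,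
          Finset.sum_range_succ' (fun i => if i = 0 then 0 else G h k (i-1)) (k/2+1)]
      simp
    rw [hB]
    ring
end
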